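/- arXiv:1010.1768 — 3 statements merged into one kernel-verified Lean document; each statement's English description precedes it below -/
import Mathlib

section
/- Let N = 4, Q(r) = (1+r²/8)^{-1}, Λf = f + rf', Df = 2f + rf', Φ = DΛQ, and (f,g) = ∫₀^∞ f g r³ dr. Then (Φ, ΛQ) = (1/2) lim_{y→∞} y⁴ |ΛQ(y)|² = 32. -/
/-!
In dimension four `(Dg) g r³ = (2g + r g') g r³` is the exact derivative of `r⁴ g² / 2`, so
`(Dg, g)` is a pure boundary term: half the limit of `r⁴ g(r)²` at infinity. For
`g = ΛQ = 8 (8 - r²) / (8 + r²)²` this limit is `(-8)² = 64`, since `ΛQ(r) ~ -8 / r²`.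
The integral converges because `DΛQ = 128 (8 - 3r²) / (8 + r²)³` decays one order faster than
`ΛQ`: `D` annihilates `r⁻²`.
-/

open Real MeasureTheory Set Filter Topology

section Flux

variable {g φ : ℝ → ℝ} (n : ℕ)

theorem hasDerivAt_pow_succ_mul_sq_div_two {g' r : ℝ} (hg : HasDerivAt g g' r) :
    HasDerivAt (fun r => r ^ (n + 1) * g r ^ 2 / 2)
      (((n + 1) / 2 * g r + r * g') * g r * r ^ n) r := by
  refine (((hasDerivAt_pow (n + 1) r).fun_mul (hg.fun_pow 2)).div_const 2).congr_deriv ?_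
  simp only [Nat.add_sub_cancel]
  push_cast
  ring

theorem integral_Ioi_mul_pow_eq_half_limit {L : ℝ} (hg0 : ContinuousWithinAt g (Ici 0) 0)
    (hg : ∀ r ∈ Ioi (0 : ℝ), DifferentiableAt ℝ g r)
    (hφ : ∀ r ∈ Ioi (0 : ℝ), φ r = (n + 1) / 2 * g r + r * deriv g r)
    (hint : IntegrableOn (fun r => φ r * g r * r ^ n) (Ioi 0))
    (hlim : Tendsto (fun r => r ^ (n + 1) * g r ^ 2) atTop (𝓝 L)) :
    ∫ r in Ioi 0, φ r * g r * r ^ n = L / 2 := by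
  have hcont : ContinuousWithinAt (fun r => r ^ (n + 1) * g r ^ 2 / 2) (Ici 0) 0 :=
    ((continuousWithinAt_id.pow (n + 1)).mul (hg0.pow 2)).div_const 2
  have hderiv : ∀ r ∈ Ioi (0 : ℝ),
      HasDerivAt (fun r => r ^ (n + 1) * g r ^ 2 / 2) (φ r * g r * r ^ n) r := fun r hr => by
    rw [hφ r hr]
    exact hasDerivAt_pow_succ_mul_sq_div_two n (hg r hr).hasDerivAt
  simpa using integral_Ioi_of_hasDerivAt_of_tendsto hcont hderiv hint (hlim.div_const 2)

end Flux

noncomputable def bubble (r : ℝ) : ℝ := (1 + r ^ 2 / 8)⁻¹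

noncomputable def lambdaBubble (r : ℝ) : ℝ := 8 * (8 - r ^ 2) / (8 + r ^ 2) ^ 2

noncomputable def dLambdaBubble (r : ℝ) : ℝ := 128 * (8 - 3 * r ^ 2) / (8 + r ^ 2) ^ 3

theorem hasDerivAt_bubble (r : ℝ) : HasDerivAt bubble (-(r / 4) / (1 + r ^ 2 / 8) ^ 2) r := by
  have h : HasDerivAt (fun r : ℝ => 1 + r ^ 2 / 8) (r / 4) r := by
    refine (((hasDerivAt_pow 2 r).div_const 8).const_add 1).congr_deriv ?_
    norm_num
    ring
  exact h.inv (by positivity)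

theorem hasDerivAt_lambdaBubble (r : ℝ) :
    HasDerivAt lambdaBubble (16 * r * (r ^ 2 - 24) / (8 + r ^ 2) ^ 3) r := by
  have hnum : HasDerivAt (fun r : ℝ => 8 * (8 - r ^ 2)) (8 * -(2 * r)) r := by
    simpa using ((hasDerivAt_pow 2 r).const_sub 8).const_mul 8
  have hden : HasDerivAt (fun r : ℝ => (8 + r ^ 2) ^ 2) (2 * (8 + r ^ 2) * (2 * r)) r := by
    simpa using ((hasDerivAt_pow 2 r).const_add 8).fun_pow 2
  refine (hnum.fun_div hden (by positivity)).congr_deriv ?_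
  field_simp
  ring

theorem bubble_add_mul_deriv (r : ℝ) : bubble r + r * deriv bubble r = lambdaBubble r := by
  rw [(hasDerivAt_bubble r).deriv, bubble, lambdaBubble]
  field_simp
  ring

theorem two_mul_lambdaBubble_add_mul_deriv (r : ℝ) :
    2 * lambdaBubble r + r * deriv lambdaBubble r = dLambdaBubble r := by
  rw [(hasDerivAt_lambdaBubble r).deriv, lambdaBubble, dLambdaBubble]
  field_simp
  ring

theorem abs_lambdaBubble_le (r : ℝ) : |lambdaBubble r| ≤ 8 / (8 + r ^ 2) := by
  have hnum : |8 - r ^ 2| ≤ 8 + r ^ 2 := abs_le.mpr ⟨by nlinarith, by nlinarith⟩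
  have hpos : (0 : ℝ) < 8 + r ^ 2 := by positivity
  rw [lambdaBubble, abs_div, abs_mul, abs_of_pos (by positivity : (0 : ℝ) < (8 + r ^ 2) ^ 2),
    abs_of_pos (by norm_num : (0 : ℝ) < 8), div_le_div_iff₀ (by positivity) hpos]
  nlinarith

theorem abs_dLambdaBubble_le (r : ℝ) : |dLambdaBubble r| ≤ 384 / (8 + r ^ 2) ^ 2 := by
  have hnum : |8 - 3 * r ^ 2| ≤ 3 * (8 + r ^ 2) := abs_le.mpr ⟨by nlinarith, by nlinarith⟩
  have hpos : (0 : ℝ) < 8 + r ^ 2 := by positivity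
  rw [dLambdaBubble, abs_div, abs_mul, abs_of_pos (by positivity : (0 : ℝ) < (8 + r ^ 2) ^ 3),
    abs_of_pos (by norm_num : (0 : ℝ) < 128), div_le_div_iff₀ (by positivity) (by positivity)]
  nlinarith [pow_pos hpos 2, pow_pos hpos 3]

theorem abs_pow_three_le_eight_add_sq_sq (r : ℝ) : |r| ^ 3 ≤ (8 + r ^ 2) ^ 2 := by
  nlinarith [sq_nonneg (|r| * (1 - |r|)), sq_abs r, sq_nonneg r]

theorem integrable_dLambdaBubble_mul_lambdaBubble_mul_pow_three :
    Integrable (fun r => dLambdaBubble r * lambdaBubble r * r ^ 3) := by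
  have hcont : Continuous (fun r => dLambdaBubble r * lambdaBubble r * r ^ 3) := by
    unfold dLambdaBubble lambdaBubble
    fun_prop (disch := intros; positivity)
  refine (integrable_inv_one_add_sq.const_mul 3072).mono' hcont.aestronglyMeasurable
    (ae_of_all _ fun r => ?_)
  calc ‖dLambdaBubble r * lambdaBubble r * r ^ 3‖
      = |dLambdaBubble r| * |lambdaBubble r| * |r| ^ 3 := by
        rw [Real.norm_eq_abs, abs_mul, abs_mul, abs_pow]
    _ ≤ 384 / (8 + r ^ 2) ^ 2 * (8 / (8 + r ^ 2)) * (8 + r ^ 2) ^ 2 := by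
        gcongr
        exacts [abs_dLambdaBubble_le r, abs_lambdaBubble_le r, abs_pow_three_le_eight_add_sq_sq r]
    _ = 3072 * (8 + r ^ 2)⁻¹ := by field_simp; ring
    _ ≤ 3072 * (1 + r ^ 2)⁻¹ := by gcongr; norm_num

theorem tendsto_sq_mul_lambdaBubble :
    Tendsto (fun r => r ^ 2 * lambdaBubble r) atTop (𝓝 (-8)) := by
  have hs : Tendsto (fun r : ℝ => (r ^ 2)⁻¹) atTop (𝓝 0) :=
    tendsto_inv_atTop_zero.comp (tendsto_pow_atTop two_ne_zero)
  have hcont : ContinuousAt (fun s : ℝ => 8 * (8 * s - 1) / (8 * s + 1) ^ 2) 0 :=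
    ContinuousAt.div (by fun_prop) (by fun_prop) (by norm_num)
  have h := hcont.tendsto.comp hs
  norm_num at h
  refine h.congr' ?_
  filter_upwards [eventually_ne_atTop 0] with r hr
  simp only [Function.comp, lambdaBubble]
  field_simp

theorem tendsto_pow_four_mul_lambdaBubble_sq :
    Tendsto (fun r => r ^ 4 * lambdaBubble r ^ 2) atTop (𝓝 64) := by
  convert tendsto_sq_mul_lambdaBubble.pow 2 using 1
  · ext r
    ring
  · norm_num

/-- In dimension `N = 4`, with `Q(r) = (1+r²/8)⁻¹`, `ΛQ = Q + r Q'`,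
`Φ = DΛQ = 2ΛQ + r (ΛQ)'` and `(f,g) = ∫₀^∞ f g r³ dr`, the Pohozaev flux
identity holds: `(Φ, ΛQ) = (1/2) lim_{y→∞} y⁴ |ΛQ(y)|² = 32`. -/
theorem stmt_6 (Q ΛQ Φ : ℝ → ℝ)
    (hQ : ∀ r : ℝ, Q r = (1 + r ^ 2 / 8)⁻¹)
    (hΛQ : ∀ r : ℝ, ΛQ r = Q r + r * deriv Q r)
    (hΦ : ∀ r : ℝ, Φ r = 2 * ΛQ r + r * deriv ΛQ r) :
    Tendsto (fun y : ℝ => y ^ 4 * |ΛQ y| ^ 2) atTop (nhds 64) ∧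
    (∫ r in Ioi (0:ℝ), Φ r * ΛQ r * r ^ 3) = (1 / 2) * 64 ∧
    (∫ r in Ioi (0:ℝ), Φ r * ΛQ r * r ^ 3) = 32 := by
  obtain rfl : Q = bubble := funext hQ
  obtain rfl : ΛQ = lambdaBubble := funext fun r => by rw [hΛQ, bubble_add_mul_deriv]
  obtain rfl : Φ = dLambdaBubble := funext fun r => by
    rw [hΦ, two_mul_lambdaBubble_add_mul_deriv]
  have hint : ∫ r in Ioi (0 : ℝ), dLambdaBubble r * lambdaBubble r * r ^ 3 = 32 := by
    have h := integral_Ioi_mul_pow_eq_half_limit 3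
      (hasDerivAt_lambdaBubble 0).continuousAt.continuousWithinAt
      (fun r _ => (hasDerivAt_lambdaBubble r).differentiableAt)
      (fun r _ => by rw [← two_mul_lambdaBubble_add_mul_deriv]; norm_num)
      integrable_dLambdaBubble_mul_lambdaBubble_mul_pow_three.integrableOn
      tendsto_pow_four_mul_lambdaBubble_sq
    rw [h]
    norm_num
  refine ⟨?_, by rw [hint]; norm_num, hint⟩
  simpa only [sq_abs] using tendsto_pow_four_mul_lambdaBubble_sq
end

section
/- Let N = 4. There exists C > 0 such that for every R > 2 and every radial v ∈ H²(ℝ⁴): ∫_{|y| ≤ R} |v|²/(|y|⁴(1+|log|y||)²) ≤ C ( ∫_{|y| ≤ R} |∂_y v|²/|y|² + ∫_{|y| ≤ 2} |v|² ). -/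
/-!
With `c r = 1 + |log r|` one has `c' = σ / r`, where `σ = -1` on `(0, 1)` and `σ = 1` on `(1, ∞)`,
so `(-σ v² / c)' = v² / (r c²) - 2σ v v' / c`. Bounding `2 |v v'| / c ≤ v² / (2 r c²) + 2 r v'²`
and integrating over `[ε, 1]` and `[1, R]` absorbs half of the weighted term; the boundary terms at
`ε` and `R` have a good sign, so `∫₀ᴿ v² / (r c²) ≤ 4 v(1)² + 4 ∫₀ᴿ r v'²` (the bound on `[ε, 1]` is
uniform in `ε`, which also gives integrability at `0`). Finally `v(1)² ≤ v(s)² + ∫₁² |(v²)'|` at a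
point `s ∈ (1, 2]` where `v²` is below its mean.
-/

open Real MeasureTheory Set intervalIntegral Filter Topology

theorem DifferentiableAt.hasDerivAt_sq {v : ℝ → ℝ} {x : ℝ} (hv : DifferentiableAt ℝ v x) :
    HasDerivAt (fun y => v y ^ 2) (2 * v x * deriv v x) x :=
  (hv.hasDerivAt.fun_pow 2).congr_deriv (by ring)

theorem intervalIntegrable_and_integral_le_of_bounded_left {f : ℝ → ℝ} {a b B : ℝ} (hab : a < b)
    (hf_cont : ContinuousOn f (Ioc a b)) (hf_nonneg : ∀ x ∈ Ioc a b, 0 ≤ f x)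
    (hB : ∀ ε ∈ Ioc a b, ∫ x in ε..b, f x ≤ B) :
    IntervalIntegrable f volume a b ∧ ∫ x in a..b, f x ≤ B := by
  set e : ℕ → ℝ := fun n => a + (b - a) * (1 / ((n : ℝ) + 1))
  have he : Tendsto e atTop (𝓝 a) := by
    simpa only [mul_zero, add_zero] using
      (tendsto_const_nhds (x := a)).add (tendsto_one_div_add_atTop_nhds_zero_nat.const_mul (b - a))
  have he_mem : ∀ n, e n ∈ Ioc a b := by
    intro n
    have h0 : 0 < 1 / ((n : ℝ) + 1) := by positivity
    have h1 : 1 / ((n : ℝ) + 1) ≤ 1 := by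
      rw [div_le_one (by positivity)]; linarith [n.cast_nonneg (α := ℝ)]
    constructor <;> simp only [e] <;> nlinarith
  have hfi : ∀ n, IntegrableOn f (Ioc (e n) b) := fun n =>
    ((hf_cont.mono (Icc_subset_Ioc_iff (he_mem n).2 |>.2 ⟨(he_mem n).1, le_rfl⟩)).integrableOn_Icc
      ).mono_set Ioc_subset_Icc_self
  have hint : IntegrableOn f (Ioc a b) := by
    refine integrableOn_Ioc_of_intervalIntegral_norm_bounded_left (I := B) hfi he
      (Eventually.of_forall fun n => ?_)
    rw [setIntegral_congr_fun measurableSet_Ioc fun x hx =>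
      Real.norm_of_nonneg (hf_nonneg x (Ioc_subset_Ioc_left (he_mem n).1.le hx)),
      ← integral_of_le (he_mem n).2]
    exact hB _ (he_mem n)
  have hint' : IntervalIntegrable f volume a b :=
    (intervalIntegrable_iff_integrableOn_Ioc_of_le hab.le).2 hint
  refine ⟨hint', le_of_tendsto' (f := fun n => ∫ x in e n..b, f x) (x := atTop) ?_
    fun n => hB _ (he_mem n)⟩
  have hprim := continuousOn_primitive_interval_left (μ := volume) (a := a) (b := b) (f := f)
    ((intervalIntegrable_iff' (by finiteness)).1 hint')
  rw [uIcc_of_le hab.le] at hprim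
  exact (hprim a (left_mem_Icc.2 hab.le)).tendsto.comp
    (tendsto_nhdsWithin_iff.2 ⟨he, Eventually.of_forall fun n => Ioc_subset_Icc_self (he_mem n)⟩)

theorem setIntegral_le_setIntegral_mul_of_one_le {α : Type*} [MeasurableSpace α] {μ : Measure α}
    {g w : α → ℝ} {s t : Set α} (hs : MeasurableSet s) (ht : MeasurableSet t) (hst : s ⊆ t)
    (hg : IntegrableOn g s μ) (hgw : IntegrableOn (fun x => g x * w x) t μ)
    (hg0 : ∀ x ∈ t, 0 ≤ g x) (hw0 : ∀ x ∈ t, 0 ≤ w x) (hw1 : ∀ x ∈ s, 1 ≤ w x) :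
    ∫ x in s, g x ∂μ ≤ ∫ x in t, g x * w x ∂μ :=
  calc ∫ x in s, g x ∂μ ≤ ∫ x in s, g x * w x ∂μ :=
        setIntegral_mono_on hg (hgw.mono_set hst) hs fun x hx =>
          le_mul_of_one_le_right (hg0 x (hst hx)) (hw1 x hx)
    _ ≤ ∫ x in t, g x * w x ∂μ :=
        setIntegral_mono_set hgw ((ae_restrict_iff' ht).2 (ae_of_all _ fun x hx =>
          mul_nonneg (hg0 x hx) (hw0 x hx))) hst.eventuallyLE

theorem integral_sq_mul_mono_interval {g : ℝ → ℝ} (hg : Continuous g) {a b c d : ℝ}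
    (hc : 0 ≤ c) (hca : c ≤ a) (hab : a ≤ b) (hbd : b ≤ d) :
    ∫ x in a..b, g x ^ 2 * x ≤ ∫ x in c..d, g x ^ 2 * x :=
  integral_mono_interval hca hab hbd
    ((ae_restrict_iff' measurableSet_Ioc).2 (ae_of_all _ fun _ hx =>
      mul_nonneg (sq_nonneg _) (hc.trans hx.1.le)))
    (((hg.pow 2).mul continuous_id).intervalIntegrable c d)

theorem integral_sq_div_mul_sq_le {v c : ℝ → ℝ} {a b σ : ℝ} (hv : ContDiff ℝ 1 v)
    (ha : 0 < a) (hab : a ≤ b) (hσ : σ ^ 2 = 1) (hc_cont : ContinuousOn c (Icc a b))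
    (hc_deriv : ∀ x ∈ Ioo a b, HasDerivAt c (σ / x) x) (hc_pos : ∀ x ∈ Icc a b, 0 < c x) :
    ∫ x in a..b, v x ^ 2 / (x * c x ^ 2)
      ≤ 2 * σ * (v a ^ 2 / c a - v b ^ 2 / c b) + 4 * ∫ x in a..b, deriv v x ^ 2 * x := by
  have hv' : Continuous (deriv v) := hv.continuous_deriv le_rfl
  have hc_ne : ∀ x ∈ Icc a b, c x ≠ 0 := fun x hx => (hc_pos x hx).ne'
  have hx_ne : ∀ x ∈ Icc a b, x ≠ 0 := fun x hx => (ha.trans_le hx.1).ne'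
  set W := fun x => v x ^ 2 / (x * c x ^ 2)
  set T := fun x => 2 * v x * deriv v x / c x
  set q := fun x => deriv v x ^ 2 * x
  have hW : IntervalIntegrable W volume a b := by
    refine (ContinuousOn.div (hv.continuous.pow 2).continuousOn
      (continuousOn_id.mul (hc_cont.pow 2)) fun x hx => ?_).intervalIntegrable_of_Icc hab
    exact mul_ne_zero (hx_ne x hx) (pow_ne_zero 2 (hc_ne x hx))
  have hT : IntervalIntegrable T volume a b :=
    (ContinuousOn.div ((continuous_const.mul hv.continuous).mul hv').continuousOn hc_cont
      hc_ne).intervalIntegrable_of_Icc hab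
  have hq : IntervalIntegrable q volume a b :=
    ((hv'.pow 2).mul continuous_id).intervalIntegrable a b
  have ftc : ∫ x in a..b, (W x - σ * T x) = σ * (v a ^ 2 / c a - v b ^ 2 / c b) := by
    have hG : ∀ x ∈ Ioo a b, HasDerivAt (fun y => -σ * (v y ^ 2 / c y)) (W x - σ * T x) x := by
      intro x hx
      have hxI : x ∈ Icc a b := Ioo_subset_Icc_self hx
      have hv2 := (hv.differentiable one_ne_zero x).hasDerivAt_sq
      refine ((hv2.div (hc_deriv x hx) (hc_ne x hxI)).const_mul (-σ)).congr_deriv ?_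
      show _ = v x ^ 2 / (x * c x ^ 2) - σ * (2 * v x * deriv v x / c x)
      field_simp [hc_ne x hxI, hx_ne x hxI]
      linear_combination v x ^ 2 * hσ
    rw [integral_eq_sub_of_hasDerivAt_of_le hab ?_ hG (hW.sub (hT.const_mul σ))]
    · ring
    · exact continuousOn_const.mul ((hv.continuous.pow 2).continuousOn.div hc_cont hc_ne)
  have amgm : ∀ x ∈ Icc a b, σ * T x ≤ W x / 2 + 2 * q x := by
    intro x hx
    have key : W x / 2 + 2 * q x - σ * T x
        = (v x / (x * c x) - 2 * σ * deriv v x) ^ 2 * (x / 2) := by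
      simp only [W, T, q]
      field_simp [hc_ne x hx, hx_ne x hx]
      linear_combination (-4 * x ^ 2 * c x ^ 2 * deriv v x ^ 2) * hσ
    have := ha.trans_le hx.1
    rw [← sub_nonneg, key]
    positivity
  have hσT : ∫ x in a..b, σ * T x ≤ ∫ x in a..b, (W x / 2 + 2 * q x) :=
    integral_mono_on hab (hT.const_mul σ) ((hW.div_const 2).add (hq.const_mul 2)) amgm
  rw [integral_sub hW (hT.const_mul σ)] at ftc
  rw [integral_add (hW.div_const 2) (hq.const_mul 2), intervalIntegral.integral_div] at hσT
  simp only [intervalIntegral.integral_const_mul] at ftc hσT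
  linarith

theorem hasDerivAt_one_add_abs_log_of_lt_one {x : ℝ} (hx0 : 0 < x) (hx1 : x < 1) :
    HasDerivAt (fun y => 1 + |log y|) (-1 / x) x :=
  (((hasDerivAt_abs_neg (log_neg hx0 hx1)).comp x (hasDerivAt_log hx0.ne')).const_add
    1).congr_deriv (by ring)

theorem hasDerivAt_one_add_abs_log_of_one_lt {x : ℝ} (hx : 1 < x) :
    HasDerivAt (fun y => 1 + |log y|) (1 / x) x :=
  (((hasDerivAt_abs_pos (log_pos hx)).comp x (hasDerivAt_log (by positivity))).const_add
    1).congr_deriv (by ring)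

theorem continuousOn_one_add_abs_log : ContinuousOn (fun x => 1 + |log x|) {0}ᶜ :=
  continuousOn_const.add continuousOn_log.abs

theorem integral_sq_div_mul_one_add_abs_log_sq_le_of_le_one {v : ℝ → ℝ} {ε : ℝ}
    (hv : ContDiff ℝ 1 v) (hε : 0 < ε) (hε1 : ε ≤ 1) :
    ∫ x in ε..1, v x ^ 2 / (x * (1 + |log x|) ^ 2)
      ≤ 2 * v 1 ^ 2 + 4 * ∫ x in ε..1, deriv v x ^ 2 * x := by
  have h := integral_sq_div_mul_sq_le hv hε hε1 (σ := -1) (by norm_num)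
    (continuousOn_one_add_abs_log.mono fun x hx => (hε.trans_le hx.1).ne')
    (fun x hx => hasDerivAt_one_add_abs_log_of_lt_one (hε.trans hx.1) hx.2)
    (fun x _ => by positivity)
  have hε_term : 0 ≤ v ε ^ 2 / (1 + |log ε|) := by positivity
  simp only [log_one, abs_zero, add_zero, div_one] at h
  linarith

theorem integral_sq_div_mul_one_add_abs_log_sq_le_of_one_le {v : ℝ → ℝ} {R : ℝ}
    (hv : ContDiff ℝ 1 v) (hR : 1 ≤ R) :
    ∫ x in (1 : ℝ)..R, v x ^ 2 / (x * (1 + |log x|) ^ 2)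
      ≤ 2 * v 1 ^ 2 + 4 * ∫ x in (1 : ℝ)..R, deriv v x ^ 2 * x := by
  have h := integral_sq_div_mul_sq_le hv one_pos hR (σ := 1) (by norm_num)
    (continuousOn_one_add_abs_log.mono fun x hx => (one_pos.trans_le hx.1).ne')
    (fun x hx => hasDerivAt_one_add_abs_log_of_one_lt hx.1)
    (fun x _ => by positivity)
  have hR_term : 0 ≤ v R ^ 2 / (1 + |log R|) := by positivity
  simp only [log_one, abs_zero, add_zero, div_one] at h
  linarith

theorem integral_sq_div_mul_one_add_abs_log_sq_le {v : ℝ → ℝ} {R : ℝ}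
    (hv : ContDiff ℝ 1 v) (hR : 1 ≤ R) :
    ∫ x in (0 : ℝ)..R, v x ^ 2 / (x * (1 + |log x|) ^ 2)
      ≤ 4 * v 1 ^ 2 + 4 * ∫ x in (0 : ℝ)..R, deriv v x ^ 2 * x := by
  have hv' : Continuous (deriv v) := hv.continuous_deriv le_rfl
  have hW_cont : ContinuousOn (fun x => v x ^ 2 / (x * (1 + |log x|) ^ 2)) (Ioi 0) :=
    (hv.continuous.pow 2).continuousOn.div (continuousOn_id.mul
      ((continuousOn_one_add_abs_log.mono fun x hx => (mem_Ioi.1 hx).ne').pow 2))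
      fun x hx => by have := mem_Ioi.1 hx; positivity
  obtain ⟨h_int₀, h_inner⟩ := intervalIntegrable_and_integral_le_of_bounded_left
    (B := 2 * v 1 ^ 2 + 4 * ∫ x in (0 : ℝ)..1, deriv v x ^ 2 * x) one_pos
    (hW_cont.mono Ioc_subset_Ioi_self) (fun x hx => by have := hx.1; positivity)
    fun ε hε => (integral_sq_div_mul_one_add_abs_log_sq_le_of_le_one hv hε.1 hε.2).trans <| by
      gcongr; exact integral_sq_mul_mono_interval hv' le_rfl hε.1.le hε.2 le_rfl
  have h_int₁ : IntervalIntegrable (fun x => v x ^ 2 / (x * (1 + |log x|) ^ 2)) volume 1 R :=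
    (hW_cont.mono fun x hx => one_pos.trans_le hx.1).intervalIntegrable_of_Icc hR
  have h_outer := integral_sq_div_mul_one_add_abs_log_sq_le_of_one_le hv hR
  have hq_int : ∀ a b, IntervalIntegrable (fun x => deriv v x ^ 2 * x) volume a b := fun a b =>
    ((hv'.pow 2).mul continuous_id).intervalIntegrable a b
  rw [← integral_add_adjacent_intervals h_int₀ h_int₁,
    ← integral_add_adjacent_intervals (hq_int 0 1) (hq_int 1 R)]
  linarith

theorem sq_le_sq_add_integral {v : ℝ → ℝ} {a s b : ℝ} (hv : ContDiff ℝ 1 v)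
    (has : a ≤ s) (hsb : s ≤ b) :
    v a ^ 2 ≤ v s ^ 2 + ∫ x in a..b, (v x ^ 2 + deriv v x ^ 2) := by
  have hv' : Continuous (deriv v) := hv.continuous_deriv le_rfl
  have hg : Continuous fun x => v x ^ 2 + deriv v x ^ 2 := (hv.continuous.pow 2).add (hv'.pow 2)
  have ftc : ∫ x in a..s, 2 * v x * deriv v x = v s ^ 2 - v a ^ 2 :=
    integral_eq_sub_of_hasDerivAt (fun x _ => (hv.differentiable one_ne_zero x).hasDerivAt_sq)
      (((continuous_const.mul hv.continuous).mul hv').intervalIntegrable _ _)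
  have h_lower : -∫ x in a..s, (v x ^ 2 + deriv v x ^ 2) ≤ ∫ x in a..s, 2 * v x * deriv v x := by
    rw [← intervalIntegral.integral_neg]
    exact integral_mono_on has (hg.neg.intervalIntegrable _ _)
      (((continuous_const.mul hv.continuous).mul hv').intervalIntegrable _ _)
      fun x _ => by nlinarith [sq_nonneg (v x + deriv v x)]
  have h_mono : ∫ x in a..s, (v x ^ 2 + deriv v x ^ 2) ≤ ∫ x in a..b, (v x ^ 2 + deriv v x ^ 2) :=
    integral_mono_interval le_rfl has hsb (ae_of_all _ fun x => by positivity)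
      (hg.intervalIntegrable _ _)
  linarith

theorem sq_le_setAverage_add_integral {v : ℝ → ℝ} {a b : ℝ} (hv : ContDiff ℝ 1 v) (hab : a < b) :
    v a ^ 2 ≤ (⨍ x in Ioc a b, v x ^ 2) + ∫ x in a..b, (v x ^ 2 + deriv v x ^ 2) := by
  obtain ⟨s, hs, hs_le⟩ := exists_le_setAverage (μ := volume) (s := Ioc a b)
    (f := fun x => v x ^ 2) (by simp [hab]) (by simp) (hv.continuous.pow 2).integrableOn_Ioc
  linarith [sq_le_sq_add_integral hv hs.1.le hs.2]

theorem sq_apply_one_le_integral_Ioc_zero_two {v : ℝ → ℝ} (hv : ContDiff ℝ 1 v) :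
    v 1 ^ 2 ≤ 2 * (∫ x in Ioc (0 : ℝ) 2, v x ^ 2 * x ^ 3)
      + ∫ x in Ioc (0 : ℝ) 2, deriv v x ^ 2 * x := by
  have hv' : Continuous (deriv v) := hv.continuous_deriv le_rfl
  have hv_int : IntegrableOn (fun x => v x ^ 2) (Ioc 1 2) := (hv.continuous.pow 2).integrableOn_Ioc
  have hv'_int : IntegrableOn (fun x => deriv v x ^ 2) (Ioc 1 2) := (hv'.pow 2).integrableOn_Ioc
  have h := sq_le_setAverage_add_integral hv one_lt_two
  rw [setAverage_eq, Real.volume_real_Ioc, integral_of_le one_le_two,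
    integral_add hv_int hv'_int] at h
  norm_num at h
  have hv_le : ∫ x in Ioc (1 : ℝ) 2, v x ^ 2 ≤ ∫ x in Ioc (0 : ℝ) 2, v x ^ 2 * x ^ 3 :=
    setIntegral_le_setIntegral_mul_of_one_le measurableSet_Ioc measurableSet_Ioc
      (Ioc_subset_Ioc_left zero_le_one) hv_int
      ((hv.continuous.pow 2).mul (continuous_pow 3)).integrableOn_Ioc
      (fun x _ => sq_nonneg _) (fun x hx => by have := hx.1; positivity)
      fun x hx => one_le_pow₀ hx.1.le
  have hv'_le : ∫ x in Ioc (1 : ℝ) 2, deriv v x ^ 2 ≤ ∫ x in Ioc (0 : ℝ) 2, deriv v x ^ 2 * x :=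
    setIntegral_le_setIntegral_mul_of_one_le measurableSet_Ioc measurableSet_Ioc
      (Ioc_subset_Ioc_left zero_le_one) hv'_int ((hv'.pow 2).mul continuous_id).integrableOn_Ioc
      (fun x _ => sq_nonneg _) (fun x hx => hx.1.le) fun x hx => hx.1.le
  linarith

/-- Logarithmic Hardy inequality in dimension `N = 4` (radial coordinates,
measure `r³ dr`): there is `C > 0` such that for every `R > 2` and every radial
`v ∈ H²`,
`∫_{r ≤ R} v²/(r⁴(1+|log r|)²) ≤ C (∫_{r ≤ R} (v')²/r² + ∫_{r ≤ 2} v²)`. -/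
theorem stmt_13 :
    ∃ C > 0, ∀ R : ℝ, 2 < R → ∀ v : ℝ → ℝ, ContDiff ℝ 2 v →
      (∫ r in Ioc (0:ℝ) R, (v r) ^ 2 / (r ^ 4 * (1 + |Real.log r|) ^ 2) * r ^ 3)
        ≤ C * ((∫ r in Ioc (0:ℝ) R, (deriv v r) ^ 2 / r ^ 2 * r ^ 3)
          + ∫ r in Ioc (0:ℝ) 2, (v r) ^ 2 * r ^ 3) := by
  refine ⟨8, by norm_num, fun R hR v hv => ?_⟩
  have hv1 : ContDiff ℝ 1 v := hv.of_le one_le_two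
  have hLHS : ∫ r in Ioc (0 : ℝ) R, v r ^ 2 / (r ^ 4 * (1 + |log r|) ^ 2) * r ^ 3
      = ∫ r in (0 : ℝ)..R, v r ^ 2 / (r * (1 + |log r|) ^ 2) := by
    rw [integral_of_le (by linarith)]
    refine setIntegral_congr_fun measurableSet_Ioc fun r hr => ?_
    have := hr.1
    field_simp
  have hRHS : ∫ r in Ioc (0 : ℝ) R, deriv v r ^ 2 / r ^ 2 * r ^ 3
      = ∫ r in (0 : ℝ)..R, deriv v r ^ 2 * r := by
    rw [integral_of_le (by linarith)]
    refine setIntegral_congr_fun measurableSet_Ioc fun r hr => ?_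
    have := hr.1
    field_simp
  have h_log := integral_sq_div_mul_one_add_abs_log_sq_le hv1 (by linarith : (1 : ℝ) ≤ R)
  have h_one := sq_apply_one_le_integral_Ioc_zero_two hv1
  have h_two := integral_sq_mul_mono_interval (hv1.continuous_deriv le_rfl) le_rfl le_rfl
    zero_le_two hR.le
  rw [integral_of_le zero_le_two] at h_two
  rw [hLHS, hRHS]
  linarith
end

section
/- Let 0 < α < 1 and let b, λ : [0, S) → (0, ∞) be C¹ functions satisfying λ_s = -bλ and |b_s| ≤ ((1-α)/10) b², with b(s) ≤ 1/2 for all s. Then the function s ↦ b(s)⁴ / ((log b(s))² λ(s)^{2(1-α)}) is nondecreasing on [0, S). -/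
open Real Set

/-! Along the flow `λ_s = -bλ`, the derivative of `b⁴/((log b)² λ^c)` is
`4b³/((log b)² λ^c) · (b_s (1 - 1/(2 log b)) + (c/4) b²)`. For `b ≤ 1/2` we have `log b ≤ -1/2`,
so the factor `1 - 1/(2 log b)` lies in `[1, 2]`, and `|b_s| ≤ (c/20) b²` (with `c = 2(1-α)`)
makes the bracket at least `(c/4 - c/10) b² ≥ 0`. -/

lemma log_le_neg_half_of_le_half {x : ℝ} (hx : 0 < x) (hx2 : x ≤ 1 / 2) : log x ≤ -1 / 2 :=
  calc log x ≤ log (1 / 2) := log_le_log hx hx2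
    _ = -log 2 := by rw [one_div, log_inv]
    _ ≤ -1 / 2 := by linarith [log_two_gt_d9]

lemma modulation_bracket_nonneg {β B ℓ c : ℝ} (hc : 0 ≤ c) (hℓ : ℓ ≤ -1 / 2)
    (hβ : |β| ≤ c / 20 * B ^ 2) : 0 ≤ β * (1 - 1 / (2 * ℓ)) + c / 4 * B ^ 2 := by
  have hfactor_nonneg : 0 ≤ 1 - 1 / (2 * ℓ) := by
    have : 1 / (2 * ℓ) < 0 := one_div_neg.mpr (by linarith)
    linarith
  have hfactor_le_two : 1 - 1 / (2 * ℓ) ≤ 2 := by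
    have : -1 ≤ 1 / (2 * ℓ) := by rw [le_div_iff_of_neg (by linarith)]; linarith
    linarith
  obtain ⟨hβ_lower, -⟩ := abs_le.mp hβ
  have hB : 0 ≤ c / 20 * B ^ 2 := by positivity
  nlinarith

lemma hasDerivAt_pow_four_div_log_sq_mul_rpow {b lam : ℝ → ℝ} {β c x : ℝ}
    (hb : HasDerivAt b β x) (hlam : HasDerivAt lam (-(b x * lam x)) x)
    (hbx : 0 < b x) (hlog : log (b x) ≠ 0) (hlamx : 0 < lam x) :
    HasDerivAt (fun s => b s ^ 4 / (log (b s) ^ 2 * lam s ^ c))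
      (4 * b x ^ 3 / (log (b x) ^ 2 * lam x ^ c) *
        (β * (1 - 1 / (2 * log (b x))) + c / 4 * b x ^ 2)) x := by
  have hpow : 0 < lam x ^ c := rpow_pos_of_pos hlamx c
  have hden : log (b x) ^ 2 * lam x ^ c ≠ 0 := by positivity
  have h := (hb.fun_pow 4).fun_div
    (((hb.log hbx.ne').fun_pow 2).fun_mul (hlam.rpow_const (Or.inl hlamx.ne'))) hden
  refine h.congr_deriv ?_
  rw [rpow_sub_one hlamx.ne']
  field_simp
  ring

theorem stmt_16_general (α S : ℝ) (hα1 : α < 1)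
    (b lam b' : ℝ → ℝ)
    (hbpos : ∀ s ∈ Ico (0:ℝ) S, 0 < b s)
    (hbsmall : ∀ s ∈ Ico (0:ℝ) S, b s ≤ 1 / 2)
    (hlampos : ∀ s ∈ Ico (0:ℝ) S, 0 < lam s)
    (hlam : ∀ s ∈ Ico (0:ℝ) S, HasDerivAt lam (-(b s * lam s)) s)
    (hb : ∀ s ∈ Ico (0:ℝ) S, HasDerivAt b (b' s) s)
    (hbs : ∀ s ∈ Ico (0:ℝ) S, |b' s| ≤ (1 - α) / 10 * (b s) ^ 2) :
    MonotoneOn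
      (fun s => (b s) ^ 4 / ((Real.log (b s)) ^ 2 * (lam s) ^ (2 * (1 - α))))
      (Ico (0:ℝ) S) := by
  have hlog : ∀ s ∈ Ico (0:ℝ) S, log (b s) ≤ -1 / 2 := fun s hs =>
    log_le_neg_half_of_le_half (hbpos s hs) (hbsmall s hs)
  have hder : ∀ s ∈ Ico (0:ℝ) S, HasDerivAt _ _ s := fun s hs =>
    hasDerivAt_pow_four_div_log_sq_mul_rpow (c := 2 * (1 - α)) (hb s hs) (hlam s hs) (hbpos s hs)
      (by linarith [hlog s hs]) (hlampos s hs)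
  refine monotoneOn_of_hasDerivWithinAt_nonneg (convex_Ico 0 S)
    (fun s hs => (hder s hs).continuousAt.continuousWithinAt)
    (fun s hs => (hder s (interior_subset hs)).hasDerivWithinAt) fun s hs => ?_
  replace hs := interior_subset hs
  have hpow : 0 < lam s ^ (2 * (1 - α)) := rpow_pos_of_pos (hlampos s hs) _
  have hbracket := modulation_bracket_nonneg (by linarith : 0 ≤ 2 * (1 - α)) (hlog s hs)
    ((hbs s hs).trans_eq (by ring) : |b' s| ≤ 2 * (1 - α) / 20 * b s ^ 2)
  have hbpos_s := hbpos s hs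
  exact mul_nonneg (by positivity) hbracket

/-- If `0 < α < 1` and `b, λ : [0,S) → (0,∞)` are `C¹` with `λ_s = -bλ`,
`|b_s| ≤ ((1-α)/10) b²` and `b ≤ 1/2`, then
`s ↦ b⁴/((log b)² λ^{2(1-α)})` is nondecreasing on `[0,S)`. -/
theorem stmt_16 (α S : ℝ) (hα : 0 < α) (hα1 : α < 1)
    (b lam b' : ℝ → ℝ)
    (hbpos : ∀ s ∈ Ico (0:ℝ) S, 0 < b s)
    (hbsmall : ∀ s ∈ Ico (0:ℝ) S, b s ≤ 1 / 2)
    (hlampos : ∀ s ∈ Ico (0:ℝ) S, 0 < lam s)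
    (hlam : ∀ s ∈ Ico (0:ℝ) S, HasDerivAt lam (-(b s * lam s)) s)
    (hb : ∀ s ∈ Ico (0:ℝ) S, HasDerivAt b (b' s) s)
    (hbs : ∀ s ∈ Ico (0:ℝ) S, |b' s| ≤ (1 - α) / 10 * (b s) ^ 2) :
    MonotoneOn
      (fun s => (b s) ^ 4 / ((Real.log (b s)) ^ 2 * (lam s) ^ (2 * (1 - α))))
      (Ico (0:ℝ) S) :=
  stmt_16_general α S hα1 b lam b' hbpos hbsmall hlampos hlam hb hbs
end
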